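/- arXiv:2211.11130 — 3 statements merged into one kernel-verified Lean document; each statement's English description precedes it below -/
import Mathlib

section
/- Let λ > 0 and ε > 0. Suppose a ∈ ℝ and b ∈ ℝ^m satisfy |a| ≤ ε‖b‖ and b ≠ 0. Then the vector u = -((a + sqrt(a² + λ‖b‖⁴))/‖b‖²)·b satisfies ‖u‖ ≤ (2 + sqrt λ)·ε, provided additionally ‖b‖ ≤ ε. -/
open Real

theorem sontag_continuity_estimate (m : ℕ) (a lam ε : ℝ) (hlam : 0 < lam) (hε : 0 < ε)
    (b : EuclideanSpace ℝ (Fin m)) (hb : b ≠ 0)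
    (ha : |a| ≤ ε * ‖b‖) (hbε : ‖b‖ ≤ ε)
    (u : EuclideanSpace ℝ (Fin m))
    (hu : u = -((a + Real.sqrt (a ^ 2 + lam * ‖b‖ ^ 4)) / ‖b‖ ^ 2) • b) :
    ‖u‖ ≤ (2 + Real.sqrt lam) * ε := by
  have hbpos : 0 < ‖b‖ := norm_pos_iff.mpr hb
  have hsl : 0 ≤ Real.sqrt lam := Real.sqrt_nonneg lam
  have hsqrt : Real.sqrt (a ^ 2 + lam * ‖b‖ ^ 4) ≤ |a| + Real.sqrt lam * ‖b‖ ^ 2 := by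
    rw [show a ^ 2 + lam * ‖b‖ ^ 4 = |a| ^ 2 + (Real.sqrt lam * ‖b‖ ^ 2) ^ 2 by
      rw [mul_pow, sq_sqrt hlam.le, sq_abs]; ring]
    calc Real.sqrt (|a| ^ 2 + (Real.sqrt lam * ‖b‖ ^ 2) ^ 2)
        ≤ Real.sqrt ((|a| + Real.sqrt lam * ‖b‖ ^ 2) ^ 2) := by
          apply Real.sqrt_le_sqrt
          nlinarith [mul_nonneg (abs_nonneg a) (mul_nonneg hsl (sq_nonneg (‖b‖:ℝ)))]
      _ = |a| + Real.sqrt lam * ‖b‖ ^ 2 := Real.sqrt_sq (by positivity)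
  have h1 : |a + Real.sqrt (a ^ 2 + lam * ‖b‖ ^ 4)| ≤ 2 * |a| + Real.sqrt lam * ‖b‖ ^ 2 := by
    calc |a + Real.sqrt (a ^ 2 + lam * ‖b‖ ^ 4)| ≤ |a| + |Real.sqrt (a ^ 2 + lam * ‖b‖ ^ 4)| :=
          abs_add_le _ _
      _ = |a| + Real.sqrt (a ^ 2 + lam * ‖b‖ ^ 4) := by rw [abs_of_nonneg (Real.sqrt_nonneg _)]
      _ ≤ 2 * |a| + Real.sqrt lam * ‖b‖ ^ 2 := by linarith
  rw [hu, norm_smul, norm_neg, Real.norm_eq_abs, abs_div,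
    abs_of_nonneg (by positivity : (0:ℝ) ≤ ‖b‖ ^ 2), div_mul_eq_mul_div]
  rw [div_le_iff₀ (by positivity)]
  calc |a + Real.sqrt (a ^ 2 + lam * ‖b‖ ^ 4)| * ‖b‖
      ≤ (2 * |a| + Real.sqrt lam * ‖b‖ ^ 2) * ‖b‖ := mul_le_mul_of_nonneg_right h1 hbpos.le
    _ ≤ (2 * (ε * ‖b‖) + Real.sqrt lam * (ε * ‖b‖)) * ‖b‖ := by
        apply mul_le_mul_of_nonneg_right _ hbpos.le
        have h3 : Real.sqrt lam * ‖b‖ ^ 2 ≤ Real.sqrt lam * (ε * ‖b‖) := by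
          apply mul_le_mul_of_nonneg_left _ hsl
          nlinarith
        linarith
    _ = (2 + Real.sqrt lam) * ε * ‖b‖ ^ 2 := by ring
end

section
/- Define κ(λ, p, q) = 0 if q = 0 and κ(λ, p, q) = -((p + sqrt(p² + λ‖q‖⁴))/‖q‖²)·q if q ≠ 0, for λ > 0, p ∈ ℝ, q ∈ ℝ^m. Then for every p ∈ ℝ and q ∈ ℝ^m, p + ⟨q, κ(λ, p, q)⟩ ≤ max(p, 0)·(if q = 0 then 1 else 0) - (if q ≠ 0 then sqrt(p² + λ‖q‖⁴) else 0); in particular, if p < 0 whenever q = 0, then p + ⟨q, κ(λ, p, q)⟩ < 0 for all (p, q) ≠ (0, 0). -/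
open Classical
open Real

section SontagFeedback

variable {E : Type*} [NormedAddCommGroup E] [InnerProductSpace ℝ E]

theorem add_inner_neg_div_norm_sq_smul_self {q : E} (hq : q ≠ 0) (p r : ℝ) :
    p + inner ℝ q (-((p + r) / ‖q‖ ^ 2) • q) = -r := by
  have hq2 : ‖q‖ ^ 2 ≠ 0 := pow_ne_zero _ (norm_ne_zero_iff.mpr hq)
  rw [real_inner_smul_right, real_inner_self_eq_norm_sq]
  field_simp
  ring

variable [DecidableEq E]

/-- Sontag's universal formula for the feedback `u = κ(λ, p, q)` given `p = L_f V` and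
`q = (L_g V)ᵀ`. -/
noncomputable def sontagFeedback (lam p : ℝ) (q : E) : E :=
  if q = 0 then 0 else -((p + √(p ^ 2 + lam * ‖q‖ ^ 4)) / ‖q‖ ^ 2) • q

theorem add_inner_sontagFeedback_of_ne_zero (lam p : ℝ) {q : E} (hq : q ≠ 0) :
    p + inner ℝ q (sontagFeedback lam p q) = -√(p ^ 2 + lam * ‖q‖ ^ 4) := by
  rw [sontagFeedback, if_neg hq, add_inner_neg_div_norm_sq_smul_self hq]

theorem add_inner_sontagFeedback_le (lam p : ℝ) (q : E) :
    p + inner ℝ q (sontagFeedback lam p q) ≤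
      max p 0 * (if q = 0 then (1 : ℝ) else 0) -
        (if q ≠ 0 then √(p ^ 2 + lam * ‖q‖ ^ 4) else 0) := by
  by_cases hq : q = 0
  · subst hq
    simp
  · simp [add_inner_sontagFeedback_of_ne_zero lam p hq, hq]

theorem add_inner_sontagFeedback_neg {lam : ℝ} (hlam : 0 < lam) {p : ℝ} {q : E}
    (hp : q = 0 → p < 0) : p + inner ℝ q (sontagFeedback lam p q) < 0 := by
  by_cases hq : q = 0
  · subst hq
    simpa using hp rfl
  · have hpos : 0 < p ^ 2 + lam * ‖q‖ ^ 4 := by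
      have := norm_pos_iff.mpr hq
      positivity
    rw [add_inner_sontagFeedback_of_ne_zero lam p hq, neg_neg_iff_pos]
    exact sqrt_pos.mpr hpos

end SontagFeedback

theorem sontag_formula_negativity (m : ℕ) (lam : ℝ) (hlam : 0 < lam)
    (κ : ℝ → ℝ → EuclideanSpace ℝ (Fin m) → EuclideanSpace ℝ (Fin m))
    (hκ : ∀ (p : ℝ) (q : EuclideanSpace ℝ (Fin m)),
      κ lam p q = if q = 0 then 0
        else -((p + Real.sqrt (p ^ 2 + lam * ‖q‖ ^ 4)) / ‖q‖ ^ 2) • q) :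
    (∀ (p : ℝ) (q : EuclideanSpace ℝ (Fin m)),
        p + inner ℝ q (κ lam p q) ≤
          max p 0 * (if q = 0 then (1 : ℝ) else 0) -
            (if q ≠ 0 then Real.sqrt (p ^ 2 + lam * ‖q‖ ^ 4) else 0)) ∧
      (∀ (p : ℝ) (q : EuclideanSpace ℝ (Fin m)),
        (q = 0 → p < 0) → (p, q) ≠ (0, 0) → p + inner ℝ q (κ lam p q) < 0) := by
  have hκ' : ∀ p q, κ lam p q = sontagFeedback lam p q := hκ
  simp only [hκ']
  exact ⟨add_inner_sontagFeedback_le lam, fun _ _ hp _ ↦ add_inner_sontagFeedback_neg hlam hp⟩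
end

section
/- The map (p, q) ↦ κ(λ, p, q), with κ as in Sontag's formula (κ(λ,p,q) = -((p + sqrt(p² + λ‖q‖⁴))/‖q‖²)·q for q ≠ 0, κ(λ,p,0) = 0), is continuous on the set {(p,q) ∈ ℝ × ℝ^m : q ≠ 0 ∨ p < 0}. -/
open Classical

theorem sontag_formula_continuous (m : ℕ) (lam : ℝ) (hlam : 0 < lam)
    (κ : ℝ → ℝ → EuclideanSpace ℝ (Fin m) → EuclideanSpace ℝ (Fin m))
    (hκ : ∀ (p : ℝ) (q : EuclideanSpace ℝ (Fin m)),
      κ lam p q = if q = 0 then 0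
        else -((p + Real.sqrt (p ^ 2 + lam * ‖q‖ ^ 4)) / ‖q‖ ^ 2) • q) :
    ContinuousOn (fun pq : ℝ × EuclideanSpace ℝ (Fin m) => κ lam pq.1 pq.2)
      {pq : ℝ × EuclideanSpace ℝ (Fin m) | pq.2 ≠ 0 ∨ pq.1 < 0} := by
  set S : Set (ℝ × EuclideanSpace ℝ (Fin m)) :=
    {pq | pq.2 ≠ 0 ∨ pq.1 < 0} with hS
  have hden : ∀ pq ∈ S, Real.sqrt (pq.1 ^ 2 + lam * ‖pq.2‖ ^ 4) - pq.1 ≠ 0 := by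
    rintro ⟨p, q⟩ (hq | hp)
    · have hq' : (0:ℝ) < ‖q‖ := norm_pos_iff.mpr hq
      have hq4 : 0 < lam * ‖q‖ ^ 4 := by positivity
      have : |p| < Real.sqrt (p ^ 2 + lam * ‖q‖ ^ 4) := by
        rw [← Real.sqrt_sq_eq_abs]
        exact Real.sqrt_lt_sqrt (by positivity) (by linarith)
      have := (abs_lt.mp this).2
      intro h; linarith
    · have : (0:ℝ) ≤ Real.sqrt (p ^ 2 + lam * ‖q‖ ^ 4) := Real.sqrt_nonneg _
      intro h
      simp only at hp h
      linarith
  have hcont : ContinuousOn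
      (fun pq : ℝ × EuclideanSpace ℝ (Fin m) =>
        -((lam * ‖pq.2‖ ^ 2) /
          (Real.sqrt (pq.1 ^ 2 + lam * ‖pq.2‖ ^ 4) - pq.1)) • pq.2) S := by
    apply ContinuousOn.fun_smul
    · apply ContinuousOn.neg
      apply ContinuousOn.div
      · fun_prop
      · apply ContinuousOn.sub
        · apply Continuous.comp_continuousOn Real.continuous_sqrt
          fun_prop
        · fun_prop
      · exact hden
    · fun_prop
  apply hcont.congr
  rintro ⟨p, q⟩ hpq
  simp only [hκ]
  by_cases hq : q = 0
  · simp [hq]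
  · simp only [if_neg hq]
    have hqn : ‖q‖ ≠ 0 := norm_ne_zero_iff.mpr hq
    have hd := hden ⟨p, q⟩ hpq
    have hsq : Real.sqrt (p ^ 2 + lam * ‖q‖ ^ 4) ^ 2 = p ^ 2 + lam * ‖q‖ ^ 4 :=
      Real.sq_sqrt (by positivity)
    congr 1
    field_simp
    nlinarith [hsq]
end
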